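/- For every type τ (generated by τ ::= χᵢ | τ→σ | τ×σ | τ+σ), the type τ is isomorphic to its exp-log normal form enf(τ): there exist closed lambda terms S : τ → enf(τ) and T : enf(τ) → τ of the simply typed lambda calculus with products and sums such that λx. T (S x) =βη λx. x and λy. S (T y) =βη λy. y. -/

import Mathlib

namespace ExpLog

-- Types generated by atoms, arrows, products and sums
-- (together with the unit type, the empty product).
inductive Ty : Type
  | atom : ℕ → Ty
  | unit : Ty
  | arr  : Ty → Ty → Ty
  | prod : Ty → Ty → Ty
  | sum  : Ty → Ty → Ty
  deriving Repr, DecidableEq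
abbrev Ctx := List Ty

-- Typed de Bruijn indices.
inductive Var : Ctx → Ty → Type
  | vz {Γ A} : Var (A :: Γ) A
  | vs {Γ A B} : Var Γ A → Var (B :: Γ) A

-- Intrinsically typed terms of the lambda calculus with sums, products (and unit).
inductive Tm : Ctx → Ty → Type
  | var  {Γ A} : Var Γ A → Tm Γ A
  | lam  {Γ A B} : Tm (A :: Γ) B → Tm Γ (Ty.arr A B)
  | app  {Γ A B} : Tm Γ (Ty.arr A B) → Tm Γ A → Tm Γ B
  | pair {Γ A B} : Tm Γ A → Tm Γ B → Tm Γ (Ty.prod A B)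
  | fst  {Γ A B} : Tm Γ (Ty.prod A B) → Tm Γ A
  | snd  {Γ A B} : Tm Γ (Ty.prod A B) → Tm Γ B
  | inl  {Γ A B} : Tm Γ A → Tm Γ (Ty.sum A B)
  | inr  {Γ A B} : Tm Γ B → Tm Γ (Ty.sum A B)
  | case {Γ A B C} : Tm Γ (Ty.sum A B) → Tm (A :: Γ) C → Tm (B :: Γ) C → Tm Γ C
  | star {Γ} : Tm Γ Ty.unit

-- Renamings and substitutions.
def Ren (Γ Δ : Ctx) : Type := ∀ A, Var Γ A → Var Δ A

def Ren.lift {Γ Δ A} (ρ : Ren Γ Δ) : Ren (A :: Γ) (A :: Δ) := fun B x =>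
  match x with
  | .vz => .vz
  | .vs y => .vs (ρ B y)

def Tm.rename : ∀ {Γ Δ : Ctx} {A}, Ren Γ Δ → Tm Γ A → Tm Δ A
  | _, _, _, ρ, .var x => .var (ρ _ x)
  | _, _, _, ρ, .lam t => .lam (Tm.rename (Ren.lift ρ) t)
  | _, _, _, ρ, .app t u => .app (Tm.rename ρ t) (Tm.rename ρ u)
  | _, _, _, ρ, .pair t u => .pair (Tm.rename ρ t) (Tm.rename ρ u)
  | _, _, _, ρ, .fst t => .fst (Tm.rename ρ t)
  | _, _, _, ρ, .snd t => .snd (Tm.rename ρ t)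
  | _, _, _, ρ, .inl t => .inl (Tm.rename ρ t)
  | _, _, _, ρ, .inr t => .inr (Tm.rename ρ t)
  | _, _, _, ρ, .case s t u =>
      .case (Tm.rename ρ s) (Tm.rename (Ren.lift ρ) t) (Tm.rename (Ren.lift ρ) u)
  | _, _, _, _, .star => .star

/-- Weakening of a term by one extra hypothesis. -/
def Tm.wk {Γ A B} (t : Tm Γ A) : Tm (B :: Γ) A := Tm.rename (fun _ v => .vs v) t

def Sub (Γ Δ : Ctx) : Type := ∀ A, Var Γ A → Tm Δ A

def Sub.lift {Γ Δ A} (σ : Sub Γ Δ) : Sub (A :: Γ) (A :: Δ) := fun B x =>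
  match x with
  | .vz => .var .vz
  | .vs y => Tm.wk (σ B y)

def Tm.subst : ∀ {Γ Δ : Ctx} {A}, Sub Γ Δ → Tm Γ A → Tm Δ A
  | _, _, _, σ, .var x => σ _ x
  | _, _, _, σ, .lam t => .lam (Tm.subst (Sub.lift σ) t)
  | _, _, _, σ, .app t u => .app (Tm.subst σ t) (Tm.subst σ u)
  | _, _, _, σ, .pair t u => .pair (Tm.subst σ t) (Tm.subst σ u)
  | _, _, _, σ, .fst t => .fst (Tm.subst σ t)
  | _, _, _, σ, .snd t => .snd (Tm.subst σ t)
  | _, _, _, σ, .inl t => .inl (Tm.subst σ t)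
  | _, _, _, σ, .inr t => .inr (Tm.subst σ t)
  | _, _, _, σ, .case s t u =>
      .case (Tm.subst σ s) (Tm.subst (Sub.lift σ) t) (Tm.subst (Sub.lift σ) u)
  | _, _, _, _, .star => .star

/-- Substitution of a single term for de Bruijn index 0. -/
def Sub.single {Γ A} (u : Tm Γ A) : Sub (A :: Γ) Γ := fun B x =>
  match x with
  | .vz => u
  | .vs y => .var y

/-- `t.subst1 u` is `t{u/x}` where `x` is de Bruijn index 0. -/
def Tm.subst1 {Γ A B} (t : Tm (A :: Γ) B) (u : Tm Γ A) : Tm Γ B := Tm.subst (Sub.single u) t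

/-- The substitution `{ι₁ x₁ / x}` (for the top variable of sum type). -/
def Sub.inlTop {Γ A B} : Sub (Ty.sum A B :: Γ) (A :: Γ) := fun C x =>
  match x with
  | .vz => .inl (.var .vz)
  | .vs y => .var (.vs y)

/-- The substitution `{ι₂ x₂ / x}` (for the top variable of sum type). -/
def Sub.inrTop {Γ A B} : Sub (Ty.sum A B :: Γ) (B :: Γ) := fun C x =>
  match x with
  | .vz => .inr (.var .vz)
  | .vs y => .var (.vs y)

/-- Exchange of the two topmost hypotheses. -/
def Ren.swap {Γ A B} : Ren (A :: B :: Γ) (B :: A :: Γ) := fun C x =>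
  match x with
  | .vz => .vs .vz
  | .vs .vz => .vz
  | .vs (.vs y) => .vs (.vs y)

-- The standard equational theory =βη of the lambda calculus with sums
-- (with the eta law for the unit type, the nullary product).
inductive Jeq : ∀ {Γ : Ctx} {A : Ty}, Tm Γ A → Tm Γ A → Prop
  | refl {Γ A} (t : Tm Γ A) : Jeq t t
  | symm {Γ A} {t u : Tm Γ A} : Jeq t u → Jeq u t
  | trans {Γ A} {t u v : Tm Γ A} : Jeq t u → Jeq u v → Jeq t v
  | lam_congr {Γ A B} {t t' : Tm (A :: Γ) B} : Jeq t t' → Jeq (Tm.lam t) (Tm.lam t')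
  | app_congr {Γ A B} {t t' : Tm Γ (Ty.arr A B)} {u u' : Tm Γ A} :
      Jeq t t' → Jeq u u' → Jeq (Tm.app t u) (Tm.app t' u')
  | pair_congr {Γ A B} {t t' : Tm Γ A} {u u' : Tm Γ B} :
      Jeq t t' → Jeq u u' → Jeq (Tm.pair t u) (Tm.pair t' u')
  | fst_congr {Γ A B} {t t' : Tm Γ (Ty.prod A B)} : Jeq t t' → Jeq (Tm.fst t) (Tm.fst t')
  | snd_congr {Γ A B} {t t' : Tm Γ (Ty.prod A B)} : Jeq t t' → Jeq (Tm.snd t) (Tm.snd t')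
  | inl_congr {Γ A B} {t t' : Tm Γ A} : Jeq t t' → Jeq (Tm.inl (B := B) t) (Tm.inl t')
  | inr_congr {Γ A B} {t t' : Tm Γ B} : Jeq t t' → Jeq (Tm.inr (A := A) t) (Tm.inr t')
  | case_congr {Γ A B C} {s s' : Tm Γ (Ty.sum A B)} {t t' : Tm (A :: Γ) C} {u u' : Tm (B :: Γ) C} :
      Jeq s s' → Jeq t t' → Jeq u u' → Jeq (Tm.case s t u) (Tm.case s' t' u')
  | beta_arr {Γ A B} (t : Tm (A :: Γ) B) (u : Tm Γ A) :
      Jeq (Tm.app (Tm.lam t) u) (Tm.subst1 t u)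
  | beta_fst {Γ A B} (t : Tm Γ A) (u : Tm Γ B) : Jeq (Tm.fst (Tm.pair t u)) t
  | beta_snd {Γ A B} (t : Tm Γ A) (u : Tm Γ B) : Jeq (Tm.snd (Tm.pair t u)) u
  | beta_inl {Γ A B C} (m : Tm Γ A) (n₁ : Tm (A :: Γ) C) (n₂ : Tm (B :: Γ) C) :
      Jeq (Tm.case (Tm.inl m) n₁ n₂) (Tm.subst1 n₁ m)
  | beta_inr {Γ A B C} (m : Tm Γ B) (n₁ : Tm (A :: Γ) C) (n₂ : Tm (B :: Γ) C) :
      Jeq (Tm.case (Tm.inr m) n₁ n₂) (Tm.subst1 n₂ m)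
  | eta_arr {Γ A B} (t : Tm Γ (Ty.arr A B)) :
      Jeq t (Tm.lam (Tm.app (Tm.wk t) (Tm.var .vz)))
  | eta_prod {Γ A B} (t : Tm Γ (Ty.prod A B)) : Jeq t (Tm.pair (Tm.fst t) (Tm.snd t))
  | eta_sum {Γ A B C} (n : Tm (Ty.sum A B :: Γ) C) (m : Tm Γ (Ty.sum A B)) :
      Jeq (Tm.subst1 n m)
          (Tm.case m (Tm.subst Sub.inlTop n) (Tm.subst Sub.inrTop n))
  | eta_unit {Γ} (t : Tm Γ Ty.unit) : Jeq t Tm.star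

/-- Type isomorphism: a pair of closed coercions whose compositions are βη-equal
to the identity. -/
def Iso (τ σ : Ty) : Prop :=
  ∃ (M : Tm [] (Ty.arr σ τ)) (N : Tm [] (Ty.arr τ σ)),
    Jeq (Tm.lam (Tm.app (Tm.wk M) (Tm.app (Tm.wk N) (Tm.var .vz))))
        (Tm.lam (Tm.var .vz)) ∧
    Jeq (Tm.lam (Tm.app (Tm.wk N) (Tm.app (Tm.wk M) (Tm.var .vz))))
        (Tm.lam (Tm.var .vz))
-- The mutually inductive grammar of exp-log normal forms:
-- conjunctive normal forms (CNF), disjunctive normal forms (DNF), and base types.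
mutual
inductive CNF : Type
  | top : CNF
  | con : CNF → Base → CNF → CNF
  deriving Repr

inductive DNF : Type
  | two : CNF → CNF → DNF
  | dis : CNF → DNF → DNF
  deriving Repr

inductive Base : Type
  | prp : ℕ → Base
  | bd  : DNF → Base
  deriving Repr
end

/-- Exp-log normal forms: either a CNF or a DNF. -/
inductive ENF : Type
  | cnf : CNF → ENF
  | dnf : DNF → ENF
  deriving Repr

/-- Flattening of `+`-associativity (auxiliary). -/
def nplus1 : DNF → ENF → DNF
  | .two c c0, .cnf c1 => .dis c (.two c0 c1)
  | .two c c0, .dnf d0 => .dis c (.dis c0 d0)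
  | .dis c d0, e2 => .dis c (nplus1 d0 e2)

/-- Flattened n-ary sum of two ENFs. -/
def nplus : ENF → ENF → DNF
  | .cnf a, .cnf c => .two a c
  | .cnf a, .dnf d => .dis a d
  | .dnf b, e2 => nplus1 b e2

/-- Flattened n-ary product of two CNFs. -/
def ntimes : CNF → CNF → CNF
  | .top, c2 => c2
  | .con c10 d c13, c2 => .con c10 d (ntimes c13 c2)

/-- Distributivity of a CNF over a DNF. -/
def distrib0 : CNF → DNF → ENF
  | c, .two c0 c1 => .dnf (.two (ntimes c c0) (ntimes c c1))
  | c, .dis c0 d0 =>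
      .dnf (match distrib0 c d0 with
            | .cnf c1 => .two (ntimes c c0) c1
            | .dnf d1 => .dis (ntimes c c0) d1)

/-- Distributivity of a CNF over an ENF. -/
def distrib1 : CNF → ENF → ENF
  | c, .cnf a => .cnf (ntimes c a)
  | c, .dnf b => distrib0 c b

/-- The exp-log rewriting `b^(c₁+⋯+cₙ) ⇝ b^c₁ ⋯ b^cₙ`. -/
def explog0 : Base → DNF → CNF
  | b, .two c1 c2 => ntimes (.con c1 b .top) (.con c2 b .top)
  | b, .dis c d3 => ntimes (.con c b .top) (explog0 b d3)

/-- The exp-log rewriting of `b^e` for an ENF exponent `e`. -/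
def explog1 : Base → ENF → CNF
  | d, .cnf c => .con c d .top
  | d, .dnf d1 => explog0 d d1

/-- Distributivity of a DNF over an ENF. -/
def distribn : DNF → ENF → ENF
  | .two c c0, e2 => .dnf (nplus (distrib1 c e2) (distrib1 c0 e2))
  | .dis c d0, e2 => .dnf (nplus (distrib1 c e2) (distribn d0 e2))

/-- Distributivity of an ENF over an ENF. -/
def distrib : ENF → ENF → ENF
  | .cnf a, e2 => distrib1 a e2
  | .dnf b, e2 => distribn b e2

/-- The exp-log rewriting of `c^{e₂}` (pointwise currying). -/
def explogn : CNF → ENF → CNF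
  | .top, _ => .top
  | .con c1 d c2, e2 => ntimes (explog1 d (distrib1 c1 e2)) (explogn c2 e2)

/-- The CNF corresponding to an atomic type: `(1→p)×1`, identified with `p`. -/
def p2c (p : ℕ) : CNF := .con .top (.prp p) .top

def b2c : Base → CNF
  | .prp p => p2c p
  | .bd d => .con .top (.bd d) .top

/-- Coercion of an ENF to a CNF. -/
def enf2cnf : ENF → CNF
  | .cnf c => c
  | .dnf d => b2c (.bd d)
/-- The structurally recursive exp-log normalization of a type. -/
def enf : Ty → ENF
  | .atom p => .cnf (p2c p)
  | .unit => .cnf .top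
  | .sum f0 f1 => .dnf (nplus (enf f0) (enf f1))
  | .prod f0 f1 => distrib (enf f0) (enf f1)
  | .arr f0 f1 => .cnf (explogn (enf2cnf (enf f1)) (enf f0))
-- Reading back an exp-log normal form as a type.
mutual
def tyC : CNF → Ty
  | .top => .unit
  | .con c b rest => .prod (.arr (tyC c) (tyB b)) (tyC rest)

def tyD : DNF → Ty
  | .two c1 c2 => .sum (tyC c1) (tyC c2)
  | .dis c d => .sum (tyC c) (tyD d)

def tyB : Base → Ty
  | .prp p => .atom p
  | .bd d => tyD d
end

def tyE : ENF → Ty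
  | .cnf c => tyC c
  | .dnf d => tyD d

/-!
Types and βη-classes of terms with one free variable form a category: composition is
substitution for that variable (`Tm.cut`), and an isomorphism in it (`TyIso`) gives an
isomorphism in the sense of `Iso` by λ-abstracting both terms. The type formers `×`, `+`
and `→` act functorially on such terms, so isomorphisms are closed under composition,
inversion and the type formers. It therefore suffices to give mutually inverse terms for
each high-school identity that `enf` applies, and to follow the recursion of `enf`.

The η-law for sums is stated for substitution instances only; the one consequence needed
is that substitution commutes with case analysis (`Jeq.subst1_case`), which makes a term out
of a sum type determined by its composites with the two injections (`Jeq.sum_ext`).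
-/

local infix:40 " ≋ " => Jeq

instance {Γ A} :
    Trans (Jeq (Γ := Γ) (A := A)) (Jeq (Γ := Γ) (A := A)) (Jeq (Γ := Γ) (A := A)) :=
  ⟨Jeq.trans⟩

theorem Jeq.of_eq {Γ A} {t u : Tm Γ A} (h : t = u) : t ≋ u := h ▸ .refl t

/-! ### Renaming and substitution -/

theorem Ren.lift_comp {Γ Δ E A} (ρ₁ : Ren Γ Δ) (ρ₂ : Ren Δ E) :
    (Ren.lift (A := A) fun B x => ρ₂ B (ρ₁ B x))
      = fun B x => Ren.lift ρ₂ B (Ren.lift ρ₁ B x) := by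
  funext B x; cases x <;> rfl

theorem Tm.rename_rename {Γ Δ E A} (t : Tm Γ A) (ρ₁ : Ren Γ Δ) (ρ₂ : Ren Δ E) :
    (t.rename ρ₁).rename ρ₂ = t.rename fun B x => ρ₂ B (ρ₁ B x) := by
  induction t generalizing Δ E <;> simp only [Tm.rename, Ren.lift_comp, *]

theorem Sub.lift_comp_ren {Γ Δ E A} (ρ : Ren Γ Δ) (σ : Sub Δ E) :
    (Sub.lift (A := A) fun B x => σ B (ρ B x))
      = fun B x => Sub.lift σ B (Ren.lift ρ B x) := by
  funext B x; cases x <;> rfl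

theorem Tm.subst_rename {Γ Δ E A} (t : Tm Γ A) (ρ : Ren Γ Δ) (σ : Sub Δ E) :
    (t.rename ρ).subst σ = t.subst fun B x => σ B (ρ B x) := by
  induction t generalizing Δ E <;> simp only [Tm.rename, Tm.subst, Sub.lift_comp_ren, *]

theorem Sub.lift_rename_comp {Γ Δ E A} (σ : Sub Γ Δ) (ρ : Ren Δ E) :
    (Sub.lift (A := A) fun B x => (σ B x).rename ρ)
      = fun B x => (Sub.lift σ B x).rename (Ren.lift ρ) := by
  funext B x
  cases x with
  | vz => rfl
  | vs y =>
      exact (Tm.rename_rename _ _ _).trans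
        (Tm.rename_rename (σ B y) (fun _ v => .vs v) (Ren.lift (A := A) ρ)).symm

theorem Tm.rename_subst {Γ Δ E A} (t : Tm Γ A) (σ : Sub Γ Δ) (ρ : Ren Δ E) :
    (t.subst σ).rename ρ = t.subst fun B x => (σ B x).rename ρ := by
  induction t generalizing Δ E <;> simp only [Tm.rename, Tm.subst, Sub.lift_rename_comp, *]

theorem Sub.lift_comp {Γ Δ E A} (σ₁ : Sub Γ Δ) (σ₂ : Sub Δ E) :
    (Sub.lift (A := A) fun B x => (σ₁ B x).subst σ₂)
      = fun B x => (Sub.lift σ₁ B x).subst (Sub.lift σ₂) := by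
  funext B x
  cases x with
  | vz => rfl
  | vs y =>
      exact (Tm.rename_subst _ _ _).trans
        (Tm.subst_rename (σ₁ B y) (fun _ v => .vs v) (Sub.lift (A := A) σ₂)).symm

theorem Tm.subst_subst {Γ Δ E A} (t : Tm Γ A) (σ₁ : Sub Γ Δ) (σ₂ : Sub Δ E) :
    (t.subst σ₁).subst σ₂ = t.subst fun B x => (σ₁ B x).subst σ₂ := by
  induction t generalizing Δ E <;> simp only [Tm.subst, Sub.lift_comp, *]

theorem Sub.lift_var_ren {Γ Δ A} (ρ : Ren Γ Δ) :
    (Sub.lift (A := A) fun B x => .var (ρ B x)) = fun B x => .var (Ren.lift ρ B x) := by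
  funext B x; cases x <;> rfl

theorem Tm.subst_var_ren {Γ Δ A} (t : Tm Γ A) (ρ : Ren Γ Δ) :
    (t.subst fun B x => .var (ρ B x)) = t.rename ρ := by
  induction t generalizing Δ <;> simp only [Tm.subst, Tm.rename, Sub.lift_var_ren, *]

theorem Sub.lift_var {Γ A} :
    (Sub.lift (Γ := Γ) (A := A) fun _ x => .var x) = fun _ x => .var x := by
  funext B x; cases x <;> rfl

theorem Tm.subst_var {Γ A} (t : Tm Γ A) : (t.subst fun _ x => .var x) = t := by
  induction t <;> simp only [Tm.subst, Sub.lift_var, *]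

theorem Tm.subst_eq_self {Γ A} (t : Tm Γ A) {σ : Sub Γ Γ} (h : ∀ B x, σ B x = .var x) :
    t.subst σ = t := by
  rw [show σ = fun _ x => .var x from funext fun B => funext (h B), Tm.subst_var]

theorem Tm.subst_wk {Γ Δ A B} (t : Tm Γ B) (σ : Sub Γ Δ) :
    (Tm.wk (B := A) t).subst (Sub.lift σ) = (t.subst σ).wk :=
  (Tm.subst_rename _ _ _).trans (Tm.rename_subst _ _ _).symm

theorem Tm.subst1_wk {Γ A B} (t : Tm Γ B) (u : Tm Γ A) : t.wk.subst1 u = t :=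
  (Tm.subst_rename _ _ _).trans (Tm.subst_var t)

theorem Tm.subst_subst1 {Γ Δ A B} (t : Tm (A :: Γ) B) (u : Tm Γ A) (σ : Sub Γ Δ) :
    (t.subst1 u).subst σ = (t.subst (Sub.lift σ)).subst1 (u.subst σ) := by
  simp only [Tm.subst1, Tm.subst_subst]
  congr 1
  funext C x
  cases x with
  | vz => rfl
  | vs y => exact (Tm.subst1_wk _ _).symm

theorem Tm.subst_inlTop {Γ Δ A B C} (n : Tm (Ty.sum A B :: Γ) C) (σ : Sub Γ Δ) :
    (n.subst Sub.inlTop).subst (Sub.lift σ) = (n.subst (Sub.lift σ)).subst Sub.inlTop := by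
  simp only [Tm.subst_subst]
  congr 1
  funext D x
  cases x with
  | vz => rfl
  | vs y =>
      show (σ D y).wk = (σ D y).wk.subst Sub.inlTop
      exact ((Tm.subst_rename _ _ Sub.inlTop).trans (Tm.subst_var_ren _ fun _ v => .vs v)).symm

theorem Tm.subst_inrTop {Γ Δ A B C} (n : Tm (Ty.sum A B :: Γ) C) (σ : Sub Γ Δ) :
    (n.subst Sub.inrTop).subst (Sub.lift σ) = (n.subst (Sub.lift σ)).subst Sub.inrTop := by
  simp only [Tm.subst_subst]
  congr 1
  funext D x
  cases x with
  | vz => rfl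
  | vs y =>
      show (σ D y).wk = (σ D y).wk.subst Sub.inrTop
      exact ((Tm.subst_rename _ _ Sub.inrTop).trans (Tm.subst_var_ren _ fun _ v => .vs v)).symm

/-! ### βη-equality under substitution -/

theorem Jeq.subst {Γ Δ A} {t u : Tm Γ A} (h : t ≋ u) (σ : Sub Γ Δ) :
    t.subst σ ≋ u.subst σ := by
  induction h generalizing Δ with
  | refl => exact .refl _
  | symm _ ih => exact (ih σ).symm
  | trans _ _ ih₁ ih₂ => exact (ih₁ σ).trans (ih₂ σ)
  | lam_congr _ ih => exact .lam_congr (ih _)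
  | app_congr _ _ ih₁ ih₂ => exact .app_congr (ih₁ σ) (ih₂ σ)
  | pair_congr _ _ ih₁ ih₂ => exact .pair_congr (ih₁ σ) (ih₂ σ)
  | fst_congr _ ih => exact .fst_congr (ih σ)
  | snd_congr _ ih => exact .snd_congr (ih σ)
  | inl_congr _ ih => exact .inl_congr (ih σ)
  | inr_congr _ ih => exact .inr_congr (ih σ)
  | case_congr _ _ _ ih₁ ih₂ ih₃ => exact .case_congr (ih₁ σ) (ih₂ _) (ih₃ _)
  | beta_arr => rw [Tm.subst_subst1]; exact .beta_arr _ _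
  | beta_fst => exact .beta_fst _ _
  | beta_snd => exact .beta_snd _ _
  | beta_inl => rw [Tm.subst_subst1]; exact .beta_inl _ _ _
  | beta_inr => rw [Tm.subst_subst1]; exact .beta_inr _ _ _
  | eta_arr t =>
      show t.subst σ ≋ .lam (.app (t.wk.subst (Sub.lift σ)) (.var .vz))
      rw [Tm.subst_wk]; exact .eta_arr _
  | eta_prod => exact .eta_prod _
  | eta_sum n m =>
      have h := Jeq.eta_sum (n.subst (Sub.lift σ)) (m.subst σ)
      rwa [← Tm.subst_subst1, ← Tm.subst_inlTop, ← Tm.subst_inrTop] at h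
  | eta_unit => exact .eta_unit _

theorem Jeq.rename {Γ Δ A} {t u : Tm Γ A} (h : t ≋ u) (ρ : Ren Γ Δ) :
    t.rename ρ ≋ u.rename ρ := by
  rw [← Tm.subst_var_ren t ρ, ← Tm.subst_var_ren u ρ]
  exact h.subst _

theorem Jeq.sub_lift {Γ Δ A} {σ σ' : Sub Γ Δ} (h : ∀ B x, σ B x ≋ σ' B x) :
    ∀ B x, Sub.lift (A := A) σ B x ≋ Sub.lift σ' B x
  | _, .vz => .refl _
  | B, .vs y => (h B y).rename _

theorem Jeq.subst_congr {Γ Δ A} (t : Tm Γ A) {σ σ' : Sub Γ Δ}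
    (h : ∀ B x, σ B x ≋ σ' B x) : t.subst σ ≋ t.subst σ' := by
  induction t generalizing Δ with
  | var x => exact h _ x
  | lam t ih => exact .lam_congr (ih (Jeq.sub_lift h))
  | app t u iht ihu => exact .app_congr (iht h) (ihu h)
  | pair t u iht ihu => exact .pair_congr (iht h) (ihu h)
  | fst t ih => exact .fst_congr (ih h)
  | snd t ih => exact .snd_congr (ih h)
  | inl t ih => exact .inl_congr (ih h)
  | inr t ih => exact .inr_congr (ih h)
  | case s t u ihs iht ihu =>
      exact .case_congr (ihs h) (iht (Jeq.sub_lift h)) (ihu (Jeq.sub_lift h))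
  | star => exact .refl _

/-! ### Terms in one variable -/

def Ren.empty {Γ} : Ren [] Γ := fun _ x => nomatch x

def Sub.empty {Γ} : Sub [] Γ := fun _ x => nomatch x

def Sub.one {Γ A} (u : Tm Γ A) : Sub [A] Γ
  | _, .vz => u

theorem Sub.eq_one {Γ A} (σ : Sub [A] Γ) : σ = Sub.one (σ A .vz) := by
  funext B x
  cases x with
  | vz => rfl
  | vs y => nomatch y

def Tm.cut {Γ A B} (t : Tm [A] B) (u : Tm Γ A) : Tm Γ B := t.subst (Sub.one u)

theorem Tm.cut_var {A B} (t : Tm [A] B) : t.cut (.var .vz) = t :=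
  (congrArg (Tm.subst · t) (Sub.eq_one fun _ x => .var x).symm).trans (Tm.subst_var t)

theorem Tm.subst_cut {Γ Δ A B} (t : Tm [A] B) (u : Tm Γ A) (σ : Sub Γ Δ) :
    (t.cut u).subst σ = t.cut (u.subst σ) := by
  rw [Tm.cut, Tm.subst_subst, Sub.eq_one (fun _ _ => _)]
  rfl

theorem Tm.rename_cut {Γ Δ A B} (t : Tm [A] B) (u : Tm Γ A) (ρ : Ren Γ Δ) :
    (t.cut u).rename ρ = t.cut (u.rename ρ) := by
  rw [Tm.cut, Tm.rename_subst, Sub.eq_one (fun _ _ => _)]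
  rfl

theorem Tm.cut_cut {Γ A B C} (t : Tm [B] C) (u : Tm [A] B) (v : Tm Γ A) :
    (t.cut u).cut v = t.cut (u.cut v) :=
  Tm.subst_cut t u _

theorem Tm.cut_eq_subst1 {Γ A B} (t : Tm [A] B) (u : Tm Γ A) :
    t.cut u = (t.subst (Sub.lift Sub.empty)).subst1 u := by
  rw [Tm.subst1, Tm.subst_subst, Sub.eq_one (fun _ _ => _)]
  rfl

theorem Tm.subst1_rename_lift {Γ A B} (t : Tm [A] B) (ρ : Ren [] Γ) (u : Tm Γ A) :
    (t.rename (Ren.lift ρ)).subst1 u = t.cut u := by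
  rw [Tm.subst1, Tm.subst_rename, Sub.eq_one (fun _ _ => _)]
  rfl

theorem Jeq.cut_left {Γ A B} {t t' : Tm [A] B} (h : t ≋ t') (u : Tm Γ A) :
    t.cut u ≋ t'.cut u :=
  h.subst _

theorem Jeq.cut_right {Γ A B} (t : Tm [A] B) {u u' : Tm Γ A} (h : u ≋ u') :
    t.cut u ≋ t.cut u' :=
  Jeq.subst_congr t fun _ x => by cases x with | vz => exact h | vs y => nomatch y

/-! ### Commuting conversions for sums -/

def Sub.shift {Γ A} : Sub Γ (A :: Γ) := fun _ y => .var (.vs y)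

def Sub.cons {Γ Δ A} (u : Tm Δ A) (σ : Sub Γ Δ) : Sub (A :: Γ) Δ
  | _, .vz => u
  | _, .vs y => σ _ y

theorem Tm.subst_lift_rename_vs {Γ Δ X Y D} (m : Tm (X :: Γ) D) (τ : Sub (Y :: Γ) Δ) :
    (m.rename (Ren.lift fun _ x => .vs x)).subst (Sub.lift τ)
      = m.subst (Sub.lift fun _ y => τ _ (.vs y)) := by
  rw [Tm.subst_rename]; congr 1; funext B x; cases x <;> rfl

theorem Jeq.case_eta {Γ A B} (s : Tm Γ (Ty.sum A B)) :
    s ≋ .case s (.inl (.var .vz)) (.inr (.var .vz)) :=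
  Jeq.eta_sum (.var .vz) s

theorem Jeq.subst1_case {Γ D C A B} (t : Tm (D :: Γ) C) (s : Tm Γ (Ty.sum A B))
    (m₁ : Tm (A :: Γ) D) (m₂ : Tm (B :: Γ) D) :
    t.subst1 (.case s m₁ m₂)
      ≋ .case s (t.subst (Sub.cons m₁ Sub.shift)) (t.subst (Sub.cons m₂ Sub.shift)) := by
  -- η for sums, applied to `t` with the case split abstracted over its scrutinee
  set n : Tm (Ty.sum A B :: Γ) C := t.subst (Sub.cons (.case (.var .vz)
    (m₁.rename (Ren.lift fun _ x => .vs x)) (m₂.rename (Ren.lift fun _ x => .vs x))) Sub.shift)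
  have hs : n.subst1 s = t.subst1 (.case s m₁ m₂) := by
    simp only [n, Tm.subst1, Tm.subst_subst]
    congr 1
    funext X x
    cases x with
    | vz =>
        simp only [Sub.cons, Sub.single, Tm.subst, Tm.subst_lift_rename_vs, Sub.lift_var,
          Tm.subst_var]
    | vs y => rfl
  have hinl : n.subst Sub.inlTop ≋ t.subst (Sub.cons m₁ Sub.shift) := by
    rw [Tm.subst_subst]
    refine Jeq.subst_congr t fun X x => ?_
    cases x with
    | vz =>
        refine (Jeq.beta_inl _ _ _).trans (.of_eq ?_)
        rw [Tm.subst1, Tm.subst_subst]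
        exact (Tm.subst_rename _ _ _).trans (Tm.subst_eq_self _ fun B x => by cases x <;> rfl)
    | vs y => exact .refl _
  have hinr : n.subst Sub.inrTop ≋ t.subst (Sub.cons m₂ Sub.shift) := by
    rw [Tm.subst_subst]
    refine Jeq.subst_congr t fun X x => ?_
    cases x with
    | vz =>
        refine (Jeq.beta_inr _ _ _).trans (.of_eq ?_)
        rw [Tm.subst1, Tm.subst_subst]
        exact (Tm.subst_rename _ _ _).trans (Tm.subst_eq_self _ fun B x => by cases x <;> rfl)
    | vs y => exact .refl _
  rw [← hs]
  exact (Jeq.eta_sum n s).trans (.case_congr (.refl s) hinl hinr)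

theorem Jeq.cut_case {Γ D C A B} (t : Tm [D] C) (s : Tm Γ (Ty.sum A B))
    (m₁ : Tm (A :: Γ) D) (m₂ : Tm (B :: Γ) D) :
    t.cut (.case s m₁ m₂) ≋ .case s (t.cut m₁) (t.cut m₂) := by
  have h {X} (m : Tm (X :: Γ) D) :
      (t.subst (Sub.lift Sub.empty)).subst (Sub.cons m Sub.shift) = t.cut m := by
    rw [Tm.subst_subst, Sub.eq_one (fun _ _ => _)]
    rfl
  rw [Tm.cut_eq_subst1, ← h, ← h]
  exact Jeq.subst1_case _ _ _ _

theorem Jeq.cut_eta_sum {A B C} (t : Tm [.sum A B] C) :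
    t ≋ .case (.var .vz) (t.cut (.inl (.var .vz))) (t.cut (.inr (.var .vz))) :=
  calc t = t.cut (.var .vz) := (Tm.cut_var t).symm
    _ ≋ t.cut (.case (.var .vz) (.inl (.var .vz)) (.inr (.var .vz))) :=
        Jeq.cut_right t (.case_eta _)
    _ ≋ _ := Jeq.cut_case _ _ _ _

theorem Jeq.sum_ext {A B C} {t t' : Tm [.sum A B] C}
    (h₁ : t.cut (.inl (.var (Γ := [A]) .vz)) ≋ t'.cut (.inl (.var .vz)))
    (h₂ : t.cut (.inr (.var (Γ := [B]) .vz)) ≋ t'.cut (.inr (.var .vz))) : t ≋ t' := by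
  have h₁' := h₁.rename (Ren.lift (Δ := [.sum A B]) Ren.empty)
  have h₂' := h₂.rename (Ren.lift (Δ := [.sum A B]) Ren.empty)
  rw [Tm.rename_cut, Tm.rename_cut] at h₁' h₂'
  exact calc t ≋ _ := Jeq.cut_eta_sum t
    _ ≋ .case (.var .vz) (t'.cut (.inl (.var .vz))) (t'.cut (.inr (.var .vz))) :=
        .case_congr (.refl _) h₁' h₂'
    _ ≋ t' := (Jeq.cut_eta_sum t').symm

/-! ### Isomorphisms of types -/

structure TyIso (A B : Ty) where
  hom : Tm [A] B
  inv : Tm [B] A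
  hom_inv_id : inv.cut hom ≋ .var .vz
  inv_hom_id : hom.cut inv ≋ .var .vz

theorem Jeq.lam_app_lam {A B C} (f : Tm [A] B) (g : Tm [B] C) :
    Tm.lam (.app (Tm.wk (.lam g)) (.app (Tm.wk (.lam f)) (.var .vz))) ≋ .lam (g.cut f) := by
  have hf : (f.rename (Ren.lift fun _ v => .vs v)).subst1 (.var .vz) = f :=
    (Tm.subst1_rename_lift f _ _).trans (Tm.cut_var f)
  refine .lam_congr ((Jeq.app_congr (.refl _) ((Jeq.beta_arr _ _).trans (.of_eq hf))).trans ?_)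
  exact (Jeq.beta_arr _ _).trans (.of_eq (Tm.subst1_rename_lift _ _ _))

theorem TyIso.iso {A B} (i : TyIso A B) : Iso A B :=
  ⟨.lam i.inv, .lam i.hom, (Jeq.lam_app_lam _ _).trans (.lam_congr i.hom_inv_id),
    (Jeq.lam_app_lam _ _).trans (.lam_congr i.inv_hom_id)⟩

theorem Jeq.cut_cut_inverse {A B C} {f : Tm [A] B} {g : Tm [B] A} {f' : Tm [B] C}
    {g' : Tm [C] B} (h : g.cut f ≋ .var .vz) (h' : g'.cut f' ≋ .var .vz) :
    (g.cut g').cut (f'.cut f) ≋ .var .vz :=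
  calc (g.cut g').cut (f'.cut f) = g.cut ((g'.cut f').cut f) := by rw [Tm.cut_cut, Tm.cut_cut]
    _ ≋ g.cut f := Jeq.cut_right g (h'.cut_left f)
    _ ≋ .var .vz := h

namespace TyIso

def refl (A : Ty) : TyIso A A := ⟨.var .vz, .var .vz, .refl _, .refl _⟩

def symm {A B} (i : TyIso A B) : TyIso B A := ⟨i.inv, i.hom, i.inv_hom_id, i.hom_inv_id⟩

def trans {A B C} (i : TyIso A B) (j : TyIso B C) : TyIso A C where
  hom := j.hom.cut i.hom
  inv := i.inv.cut j.inv
  hom_inv_id := Jeq.cut_cut_inverse i.hom_inv_id j.hom_inv_id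
  inv_hom_id := Jeq.cut_cut_inverse j.inv_hom_id i.inv_hom_id

end TyIso

/-! ### Functoriality of the type formers -/

def Tm.prodMap {A A' B B'} (f : Tm [A] A') (g : Tm [B] B') : Tm [.prod A B] (.prod A' B') :=
  .pair (f.cut (.fst (.var .vz))) (g.cut (.snd (.var .vz)))

def Tm.sumMap {A A' B B'} (f : Tm [A] A') (g : Tm [B] B') : Tm [.sum A B] (.sum A' B') :=
  .case (.var .vz) (.inl (f.cut (.var .vz))) (.inr (g.cut (.var .vz)))

def Tm.arrMap {A A' B B'} (f : Tm [A'] A) (g : Tm [B] B') : Tm [.arr A B] (.arr A' B') :=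
  .lam (g.cut (.app (.var (.vs .vz)) (f.cut (.var .vz))))

namespace Tm

variable {A A' A'' B B' B'' : Ty}

theorem prodMap_comp (f : Tm [A'] A'') (g : Tm [B'] B'') (f' : Tm [A] A') (g' : Tm [B] B') :
    (prodMap f g).cut (prodMap f' g') ≋ prodMap (f.cut f') (g.cut g') := by
  show Tm.pair ((f.cut _).cut (prodMap f' g')) ((g.cut _).cut (prodMap f' g'))
    ≋ .pair ((f.cut f').cut _) ((g.cut g').cut _)
  simp only [Tm.cut_cut]
  exact .pair_congr (Jeq.cut_right f (.beta_fst _ _)) (Jeq.cut_right g (.beta_snd _ _))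

theorem prodMap_congr {f f' : Tm [A] A'} {g g' : Tm [B] B'} (hf : f ≋ f') (hg : g ≋ g') :
    prodMap f g ≋ prodMap f' g' :=
  .pair_congr (hf.cut_left _) (hg.cut_left _)

theorem prodMap_id : prodMap (A := A) (B := B) (.var .vz) (.var .vz) ≋ .var .vz :=
  (Jeq.eta_prod _).symm

theorem sumMap_cut_inl {Γ} (f : Tm [A] A') (g : Tm [B] B') (u : Tm Γ A) :
    (sumMap f g).cut (.inl u) ≋ .inl (f.cut u) := by
  refine (Jeq.beta_inl _ _ _).trans (.of_eq ?_)
  show Tm.inl (((f.cut (.var .vz)).subst _).subst1 u) = _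
  rw [Tm.subst1, Tm.subst_cut, Tm.subst_cut]
  rfl

theorem sumMap_cut_inr {Γ} (f : Tm [A] A') (g : Tm [B] B') (u : Tm Γ B) :
    (sumMap f g).cut (.inr u) ≋ .inr (g.cut u) := by
  refine (Jeq.beta_inr _ _ _).trans (.of_eq ?_)
  show Tm.inr (((g.cut (.var .vz)).subst _).subst1 u) = _
  rw [Tm.subst1, Tm.subst_cut, Tm.subst_cut]
  rfl

theorem sumMap_comp (f : Tm [A'] A'') (g : Tm [B'] B'') (f' : Tm [A] A') (g' : Tm [B] B') :
    (sumMap f g).cut (sumMap f' g') ≋ sumMap (f.cut f') (g.cut g') :=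
  (Jeq.cut_case _ _ _ _).trans (.case_congr (.refl _)
    ((sumMap_cut_inl _ _ _).trans (.of_eq (by rw [Tm.cut_cut])))
    ((sumMap_cut_inr _ _ _).trans (.of_eq (by rw [Tm.cut_cut]))))

theorem sumMap_congr {f f' : Tm [A] A'} {g g' : Tm [B] B'} (hf : f ≋ f') (hg : g ≋ g') :
    sumMap f g ≋ sumMap f' g' :=
  .case_congr (.refl _) (.inl_congr (hf.cut_left _)) (.inr_congr (hg.cut_left _))

theorem sumMap_id : sumMap (A := A) (B := B) (.var .vz) (.var .vz) ≋ .var .vz :=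
  (Jeq.case_eta _).symm

theorem arrMap_comp (f : Tm [A''] A') (g : Tm [B'] B'') (f' : Tm [A'] A) (g' : Tm [B] B') :
    (arrMap f g).cut (arrMap f' g') ≋ arrMap (f'.cut f) (g.cut g') := by
  refine .lam_congr ?_
  show (g.cut _).subst _ ≋ _
  rw [Tm.subst_cut]
  show g.cut (.app (arrMap f' g').wk ((f.cut (.var .vz)).subst _)) ≋ _
  rw [Tm.subst_cut, Tm.cut_cut g g']
  refine Jeq.cut_right g ((Jeq.beta_arr _ _).trans (.of_eq ?_))
  show ((g'.cut _).rename _).subst1 _ = _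
  rw [Tm.rename_cut, Tm.subst1, Tm.subst_cut]
  show g'.cut (.app _ (((f'.cut _).rename _).subst _)) = _
  rw [Tm.rename_cut, Tm.subst_cut, Tm.cut_cut]
  rfl

theorem arrMap_congr {f f' : Tm [A'] A} {g g' : Tm [B] B'} (hf : f ≋ f') (hg : g ≋ g') :
    arrMap f g ≋ arrMap f' g' :=
  .lam_congr ((Jeq.cut_right _ (.app_congr (.refl _) (hf.cut_left _))).trans (hg.cut_left _))

theorem arrMap_id : arrMap (A := A) (B := B) (.var .vz) (.var .vz) ≋ .var .vz :=
  (Jeq.eta_arr (Γ := [.arr A B]) (.var .vz)).symm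

end Tm

namespace TyIso

variable {A A' B B' : Ty}

def prodCongr (i : TyIso A A') (j : TyIso B B') : TyIso (.prod A B) (.prod A' B') where
  hom := .prodMap i.hom j.hom
  inv := .prodMap i.inv j.inv
  hom_inv_id := (Tm.prodMap_comp _ _ _ _).trans
    ((Tm.prodMap_congr i.hom_inv_id j.hom_inv_id).trans Tm.prodMap_id)
  inv_hom_id := (Tm.prodMap_comp _ _ _ _).trans
    ((Tm.prodMap_congr i.inv_hom_id j.inv_hom_id).trans Tm.prodMap_id)

def sumCongr (i : TyIso A A') (j : TyIso B B') : TyIso (.sum A B) (.sum A' B') where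
  hom := .sumMap i.hom j.hom
  inv := .sumMap i.inv j.inv
  hom_inv_id := (Tm.sumMap_comp _ _ _ _).trans
    ((Tm.sumMap_congr i.hom_inv_id j.hom_inv_id).trans Tm.sumMap_id)
  inv_hom_id := (Tm.sumMap_comp _ _ _ _).trans
    ((Tm.sumMap_congr i.inv_hom_id j.inv_hom_id).trans Tm.sumMap_id)

def arrowCongr (i : TyIso A A') (j : TyIso B B') : TyIso (.arr A B) (.arr A' B') where
  hom := .arrMap i.inv j.hom
  inv := .arrMap i.hom j.inv
  hom_inv_id := (Tm.arrMap_comp _ _ _ _).trans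
    ((Tm.arrMap_congr i.hom_inv_id j.hom_inv_id).trans Tm.arrMap_id)
  inv_hom_id := (Tm.arrMap_comp _ _ _ _).trans
    ((Tm.arrMap_congr i.inv_hom_id j.inv_hom_id).trans Tm.arrMap_id)

end TyIso

/-! ### The high-school isomorphisms -/

namespace TyIso

def prodComm (A B : Ty) : TyIso (.prod A B) (.prod B A) where
  hom := .pair (.snd (.var .vz)) (.fst (.var .vz))
  inv := .pair (.snd (.var .vz)) (.fst (.var .vz))
  hom_inv_id := (Jeq.pair_congr (.beta_snd _ _) (.beta_fst _ _)).trans (.symm (.eta_prod _))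
  inv_hom_id := (Jeq.pair_congr (.beta_snd _ _) (.beta_fst _ _)).trans (.symm (.eta_prod _))

def prodAssoc (A B C : Ty) : TyIso (.prod (.prod A B) C) (.prod A (.prod B C)) where
  hom := .pair (.fst (.fst (.var .vz))) (.pair (.snd (.fst (.var .vz))) (.snd (.var .vz)))
  inv := .pair (.pair (.fst (.var .vz)) (.fst (.snd (.var .vz)))) (.snd (.snd (.var .vz)))
  hom_inv_id :=
    calc _ ≋ Tm.pair (.pair (.fst (.fst (.var .vz))) (.snd (.fst (.var .vz))))
            (.snd (.var .vz)) :=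
          .pair_congr (.pair_congr (.beta_fst _ _)
            ((Jeq.fst_congr (.beta_snd _ _)).trans (.beta_fst _ _)))
            ((Jeq.snd_congr (.beta_snd _ _)).trans (.beta_snd _ _))
      _ ≋ .var .vz := (Jeq.pair_congr (Jeq.eta_prod _).symm (.refl _)).trans (Jeq.eta_prod _).symm
  inv_hom_id :=
    calc _ ≋ Tm.pair (.fst (.var .vz))
            (.pair (.fst (.snd (.var .vz))) (.snd (.snd (.var .vz)))) :=
          .pair_congr ((Jeq.fst_congr (.beta_fst _ _)).trans (.beta_fst _ _))
            (.pair_congr ((Jeq.snd_congr (.beta_fst _ _)).trans (.beta_snd _ _)) (.beta_snd _ _))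
      _ ≋ .var .vz := (Jeq.pair_congr (.refl _) (Jeq.eta_prod _).symm).trans (Jeq.eta_prod _).symm

def unitProd (A : Ty) : TyIso (.prod .unit A) A where
  hom := .snd (.var .vz)
  inv := .pair .star (.var .vz)
  hom_inv_id := (Jeq.pair_congr (Jeq.eta_unit _).symm (.refl _)).trans (Jeq.eta_prod _).symm
  inv_hom_id := .beta_snd _ _

def prodUnit (A : Ty) : TyIso (.prod A .unit) A where
  hom := .fst (.var .vz)
  inv := .pair (.var .vz) .star
  hom_inv_id := (Jeq.pair_congr (.refl _) (Jeq.eta_unit _).symm).trans (Jeq.eta_prod _).symm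
  inv_hom_id := .beta_fst _ _

def unitArrow (A : Ty) : TyIso (.arr .unit A) A where
  hom := .app (.var .vz) .star
  inv := .lam (.var (.vs .vz))
  hom_inv_id :=
    (Jeq.lam_congr (.app_congr (.refl _) (Jeq.eta_unit _).symm)).trans (Jeq.eta_arr (.var .vz)).symm
  inv_hom_id := .beta_arr _ _

def arrowUnit (A : Ty) : TyIso (.arr A .unit) .unit where
  hom := .star
  inv := .lam .star
  hom_inv_id := (Jeq.lam_congr (Jeq.eta_unit _).symm).trans (Jeq.eta_arr (.var .vz)).symm
  inv_hom_id := (Jeq.eta_unit _).symm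

def arrowProd (A B C : Ty) : TyIso (.arr A (.prod B C)) (.prod (.arr A B) (.arr A C)) where
  hom := .pair (.lam (.fst (.app (.var (.vs .vz)) (.var .vz))))
    (.lam (.snd (.app (.var (.vs .vz)) (.var .vz))))
  inv := .lam (.pair (.app (.fst (.var (.vs .vz))) (.var .vz))
    (.app (.snd (.var (.vs .vz))) (.var .vz)))
  -- `by exact` in a first `calc` step delays it until its left-hand side is known from the
  -- goal; the β-steps cannot be elaborated without it.
  hom_inv_id :=
    calc _ ≋ Tm.lam (.pair (.fst (.app (.var (.vs .vz)) (.var .vz)))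
              (.snd (.app (.var (.vs .vz)) (.var .vz)))) := by
          exact .lam_congr (.pair_congr
            ((Jeq.app_congr (.beta_fst _ _) (.refl _)).trans (.beta_arr _ _))
            ((Jeq.app_congr (.beta_snd _ _) (.refl _)).trans (.beta_arr _ _)))
      _ ≋ .var .vz := .trans (.lam_congr (.symm (.eta_prod _))) (.symm (.eta_arr (.var .vz)))
  inv_hom_id :=
    calc _ ≋ Tm.pair (.lam (.app (.fst (.var (.vs .vz))) (.var .vz)))
              (.lam (.app (.snd (.var (.vs .vz))) (.var .vz))) := by
          exact .pair_congr
            (.lam_congr ((Jeq.fst_congr (.beta_arr _ _)).trans (.beta_fst _ _)))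
            (.lam_congr ((Jeq.snd_congr (.beta_arr _ _)).trans (.beta_snd _ _)))
      _ ≋ .var .vz := .trans
          (.pair_congr (.symm (.eta_arr (.fst (.var .vz)))) (.symm (.eta_arr (.snd (.var .vz)))))
          (.symm (.eta_prod _))

def arrowArrow (A B C : Ty) : TyIso (.arr A (.arr B C)) (.arr (.prod B A) C) where
  hom := .lam (.app (.app (.var (.vs .vz)) (.snd (.var .vz))) (.fst (.var .vz)))
  inv := .lam (.lam (.app (.var (.vs (.vs .vz))) (.pair (.var .vz) (.var (.vs .vz)))))
  hom_inv_id :=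
    calc _ ≋ Tm.lam (.lam (.app (.app (.var (.vs (.vs .vz))) (.var (.vs .vz))) (.var .vz))) := by
          exact .lam_congr (.lam_congr ((Jeq.beta_arr _ _).trans
            (.app_congr (.app_congr (.refl _) (.beta_snd _ _)) (.beta_fst _ _))))
      _ ≋ .lam (.app (.var (.vs .vz)) (.var .vz)) :=
          .lam_congr (.symm (.eta_arr (.app (.var (.vs .vz)) (.var .vz))))
      _ ≋ .var .vz := .symm (.eta_arr (.var .vz))
  inv_hom_id :=
    calc _ ≋ Tm.lam (.app (.var (.vs .vz)) (.pair (.fst (.var .vz)) (.snd (.var .vz)))) := by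
          exact .lam_congr ((Jeq.app_congr (.beta_arr _ _) (.refl _)).trans (.beta_arr _ _))
      _ ≋ .var .vz :=
          .trans (.lam_congr (.app_congr (.refl _) (.symm (.eta_prod _))))
            (.symm (.eta_arr (.var .vz)))

def sumArrow (A B C : Ty) : TyIso (.arr (.sum A B) C) (.prod (.arr A C) (.arr B C)) where
  hom := .pair (.lam (.app (.var (.vs .vz)) (.inl (.var .vz))))
    (.lam (.app (.var (.vs .vz)) (.inr (.var .vz))))
  inv := .lam (.case (.var .vz) (.app (.fst (.var (.vs (.vs .vz)))) (.var .vz))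
    (.app (.snd (.var (.vs (.vs .vz)))) (.var .vz)))
  hom_inv_id :=
    calc _ ≋ Tm.lam (.case (.var .vz) (.app (.var (.vs (.vs .vz))) (.inl (.var .vz)))
              (.app (.var (.vs (.vs .vz))) (.inr (.var .vz)))) := by
          exact .lam_congr (.case_congr (.refl _)
            ((Jeq.app_congr (.beta_fst _ _) (.refl _)).trans (.beta_arr _ _))
            ((Jeq.app_congr (.beta_snd _ _) (.refl _)).trans (.beta_arr _ _)))
      _ ≋ .lam (.app (.var (.vs .vz)) (.var .vz)) := .lam_congr (.symm
          (.eta_sum (Γ := [.sum A B, .arr (.sum A B) C])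
            (.app (.var (.vs (.vs .vz))) (.var .vz)) (.var .vz)))
      _ ≋ .var .vz := .symm (.eta_arr (.var .vz))
  inv_hom_id :=
    calc _ ≋ Tm.pair (.lam (.app (.fst (.var (.vs .vz))) (.var .vz)))
              (.lam (.app (.snd (.var (.vs .vz))) (.var .vz))) := by
          exact .pair_congr (.lam_congr ((Jeq.beta_arr _ _).trans (.beta_inl _ _ _)))
            (.lam_congr ((Jeq.beta_arr _ _).trans (.beta_inr _ _ _)))
      _ ≋ .var .vz := .trans
          (.pair_congr (.symm (.eta_arr (.fst (.var .vz)))) (.symm (.eta_arr (.snd (.var .vz)))))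
          (.symm (.eta_prod _))

def sumAssoc (A B C : Ty) : TyIso (.sum (.sum A B) C) (.sum A (.sum B C)) where
  hom := .case (.var .vz) (.case (.var .vz) (.inl (.var .vz)) (.inr (.inl (.var .vz))))
    (.inr (.inr (.var .vz)))
  inv := .case (.var .vz) (.inl (.inl (.var .vz)))
    (.case (.var .vz) (.inl (.inr (.var .vz))) (.inr (.var .vz)))
  hom_inv_id := by
    refine .sum_ext (.sum_ext ?_ ?_) ?_ <;> simp only [Tm.cut_cut]
    · exact .trans (Jeq.cut_right _ (.trans (.beta_inl _ _ _) (.beta_inl _ _ _))) (.beta_inl _ _ _)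
    · exact .trans (Jeq.cut_right _ (.trans (.beta_inl _ _ _) (.beta_inr _ _ _)))
        (.trans (.beta_inr _ _ _) (.beta_inl _ _ _))
    · exact .trans (Jeq.cut_right _ (.beta_inr _ _ _)) (.trans (.beta_inr _ _ _) (.beta_inr _ _ _))
  inv_hom_id := by
    refine .sum_ext ?_ (.sum_ext ?_ ?_) <;> simp only [Tm.cut_cut]
    · exact .trans (Jeq.cut_right _ (.beta_inl _ _ _)) (.trans (.beta_inl _ _ _) (.beta_inl _ _ _))
    · exact .trans (Jeq.cut_right _ (.trans (.beta_inr _ _ _) (.beta_inl _ _ _)))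
        (.trans (.beta_inl _ _ _) (.beta_inr _ _ _))
    · exact .trans (Jeq.cut_right _ (.trans (.beta_inr _ _ _) (.beta_inr _ _ _))) (.beta_inr _ _ _)

def prodSumDistrib (A B C : Ty) : TyIso (.prod A (.sum B C)) (.sum (.prod A B) (.prod A C)) where
  hom := .case (.snd (.var .vz)) (.inl (.pair (.fst (.var (.vs .vz))) (.var .vz)))
    (.inr (.pair (.fst (.var (.vs .vz))) (.var .vz)))
  inv := .case (.var .vz) (.pair (.fst (.var .vz)) (.inl (.snd (.var .vz))))
    (.pair (.fst (.var .vz)) (.inr (.snd (.var .vz))))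
  hom_inv_id := by
    refine (Jeq.cut_case _ _ _ _).trans ?_
    calc _ ≋ .case (.snd (.var .vz)) (.pair (.fst (.var (.vs .vz))) (.inl (.var .vz)))
            (.pair (.fst (.var (.vs .vz))) (.inr (.var .vz))) := by
          exact .case_congr (.refl _)
            (.trans (.beta_inl _ _ _) (.pair_congr (.beta_fst _ _) (.inl_congr (.beta_snd _ _))))
            (.trans (.beta_inr _ _ _) (.pair_congr (.beta_fst _ _) (.inr_congr (.beta_snd _ _))))
      _ ≋ .pair (.fst (.var .vz)) (.case (.snd (.var .vz)) (.inl (.var .vz)) (.inr (.var .vz))) :=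
          .symm (Jeq.subst1_case (Γ := [.prod A (.sum B C)])
            (.pair (.fst (.var (.vs .vz))) (.var .vz)) (.snd (.var .vz))
            (.inl (.var .vz)) (.inr (.var .vz)))
      _ ≋ .var .vz := .trans (.pair_congr (.refl _) (.symm (.case_eta _))) (.symm (.eta_prod _))
  inv_hom_id := by
    refine .sum_ext ?_ ?_ <;> simp only [Tm.cut_cut]
    · exact .trans (Jeq.cut_right _ (.beta_inl _ _ _))
        (.trans (.case_congr (.beta_snd _ _) (.refl _) (.refl _)) (.trans (.beta_inl _ _ _)
          (.inl_congr (.trans (.pair_congr (.beta_fst _ _) (.refl _)) (.symm (.eta_prod _))))))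
    · exact .trans (Jeq.cut_right _ (.beta_inr _ _ _))
        (.trans (.case_congr (.beta_snd _ _) (.refl _) (.refl _)) (.trans (.beta_inr _ _ _)
          (.inr_congr (.trans (.pair_congr (.beta_fst _ _) (.refl _)) (.symm (.eta_prod _))))))

def sumProdDistrib (A B C : Ty) : TyIso (.prod (.sum A B) C) (.sum (.prod A C) (.prod B C)) :=
  (prodComm _ _).trans ((prodSumDistrib C A B).trans (sumCongr (prodComm _ _) (prodComm _ _)))

end TyIso

/-! ### Exp-log normal forms -/

def nplus1Iso : ∀ (d : DNF) (e : ENF), TyIso (.sum (tyD d) (tyE e)) (tyD (nplus1 d e))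
  | .two c c₀, .cnf c₁ => .sumAssoc (tyC c) (tyC c₀) (tyC c₁)
  | .two c c₀, .dnf d₀ => .sumAssoc (tyC c) (tyC c₀) (tyD d₀)
  | .dis _ d₀, e => (TyIso.sumAssoc _ _ _).trans (.sumCongr (.refl _) (nplus1Iso d₀ e))

def nplusIso : ∀ (e₁ e₂ : ENF), TyIso (.sum (tyE e₁) (tyE e₂)) (tyD (nplus e₁ e₂))
  | .cnf _, .cnf _ => .refl _
  | .cnf _, .dnf _ => .refl _
  | .dnf d, e => nplus1Iso d e

def ntimesIso : ∀ (c₁ c₂ : CNF), TyIso (.prod (tyC c₁) (tyC c₂)) (tyC (ntimes c₁ c₂))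
  | .top, c => .unitProd (tyC c)
  | .con _ _ c₁, c₂ =>
      (TyIso.prodAssoc _ _ _).trans (.prodCongr (.refl _) (ntimesIso c₁ c₂))

theorem distrib0_dis (c c₀ : CNF) (d : DNF) :
    distrib0 c (.dis c₀ d) = .dnf (nplus (.cnf (ntimes c c₀)) (distrib0 c d)) := by
  rw [distrib0]
  cases distrib0 c d <;> rfl

def distrib0Iso : ∀ (c : CNF) (d : DNF), TyIso (.prod (tyC c) (tyD d)) (tyE (distrib0 c d))
  | c, .two c₀ c₁ =>
      (TyIso.prodSumDistrib _ _ _).trans (.sumCongr (ntimesIso c c₀) (ntimesIso c c₁))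
  | c, .dis c₀ d => distrib0_dis c c₀ d ▸
      (TyIso.prodSumDistrib _ _ _).trans
        ((TyIso.sumCongr (ntimesIso c c₀) (distrib0Iso c d)).trans
          (nplusIso (.cnf (ntimes c c₀)) (distrib0 c d)))

def distrib1Iso : ∀ (c : CNF) (e : ENF), TyIso (.prod (tyC c) (tyE e)) (tyE (distrib1 c e))
  | c, .cnf c' => ntimesIso c c'
  | c, .dnf d => distrib0Iso c d

def distribnIso : ∀ (d : DNF) (e : ENF), TyIso (.prod (tyD d) (tyE e)) (tyE (distribn d e))
  | .two c c₀, e => (TyIso.sumProdDistrib _ _ _).trans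
      ((TyIso.sumCongr (distrib1Iso c e) (distrib1Iso c₀ e)).trans
        (nplusIso (distrib1 c e) (distrib1 c₀ e)))
  | .dis c d, e => (TyIso.sumProdDistrib _ _ _).trans
      ((TyIso.sumCongr (distrib1Iso c e) (distribnIso d e)).trans
        (nplusIso (distrib1 c e) (distribn d e)))

def distribIso :
    ∀ (e₁ e₂ : ENF), TyIso (.prod (tyE e₁) (tyE e₂)) (tyE (distrib e₁ e₂))
  | .cnf c, e => distrib1Iso c e
  | .dnf d, e => distribnIso d e

def explog0Iso : ∀ (b : Base) (d : DNF), TyIso (.arr (tyD d) (tyB b)) (tyC (explog0 b d))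
  | b, .two c₁ c₂ => (TyIso.sumArrow _ _ _).trans
      ((TyIso.prodCongr (.symm (.prodUnit _)) (.symm (.prodUnit _))).trans
        (ntimesIso (.con c₁ b .top) (.con c₂ b .top)))
  | b, .dis c d => (TyIso.sumArrow _ _ _).trans
      ((TyIso.prodCongr (.symm (.prodUnit _)) (explog0Iso b d)).trans
        (ntimesIso (.con c b .top) (explog0 b d)))

def explog1Iso : ∀ (b : Base) (e : ENF), TyIso (.arr (tyE e) (tyB b)) (tyC (explog1 b e))
  | _, .cnf _ => .symm (.prodUnit _)
  | b, .dnf d => explog0Iso b d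

def enf2cnfIso : ∀ (e : ENF), TyIso (tyE e) (tyC (enf2cnf e))
  | .cnf _ => .refl _
  | .dnf d => (TyIso.unitArrow (tyD d)).symm.trans (.symm (.prodUnit _))

def explognIso : ∀ (c : CNF) (e : ENF), TyIso (.arr (tyE e) (tyC c)) (tyC (explogn c e))
  | .top, e => .arrowUnit (tyE e)
  | .con c₁ b c₂, e => (TyIso.arrowProd _ _ _).trans
      ((TyIso.prodCongr
        ((TyIso.arrowArrow (tyE e) (tyC c₁) (tyB b)).trans
          ((TyIso.arrowCongr (distrib1Iso c₁ e) (.refl _)).trans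
            (explog1Iso b (distrib1 c₁ e))))
        (explognIso c₂ e)).trans
      (ntimesIso (explog1 b (distrib1 c₁ e)) (explogn c₂ e)))

def enfIso : ∀ (τ : Ty), TyIso τ (tyE (enf τ))
  | .atom p => (TyIso.unitArrow (.atom p)).symm.trans (.symm (.prodUnit _))
  | .unit => .refl _
  | .arr τ σ => (TyIso.arrowCongr (enfIso τ) ((enfIso σ).trans (enf2cnfIso (enf σ)))).trans
      (explognIso (enf2cnf (enf σ)) (enf τ))
  | .prod τ σ => (TyIso.prodCongr (enfIso τ) (enfIso σ)).trans (distribIso (enf τ) (enf σ))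
  | .sum τ σ => (TyIso.sumCongr (enfIso τ) (enfIso σ)).trans (nplusIso (enf τ) (enf σ))

/-- Every type is isomorphic to its exp-log normal form:
there are closed coercions in both directions whose compositions are
βη-equal to the identity. -/
theorem iso_enf (τ : Ty) : Iso τ (tyE (enf τ)) :=
  (enfIso τ).iso

end ExpLog
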